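/- arXiv:2404.06586 — 2 statements merged into one kernel-verified Lean document; each statement's English description precedes it below -/
import Mathlib

section
/- The functions I_0 = λ_{2n+1}, I_k = λ_{k+n}, and I_{n+k} = λ_k + y_k λ_{2n+1} (k = 1,…,n) are first integrals of the Hamiltonian system on T*ℝ^{2n+1} with Hamiltonian H = (1/2) Σ_{k=1}^n (1/σ_k)[λ_k² + (λ_{k+n} + x_k λ_{2n+1})²]: each has vanishing canonical Poisson bracket with H. -/
/-- Phase space `T*ℝ^{2n+1}` with coordinates `(q, λ)`,
`q = (x₁,…,xₙ,y₁,…,yₙ,z)`. -/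
abbrev Phase (n : ℕ) := (Fin (2 * n + 1) → ℝ) × (Fin (2 * n + 1) → ℝ)

/-- Index of `x_k` (resp. `λ_k`). -/
def ix {n : ℕ} (k : Fin n) : Fin (2 * n + 1) := ⟨k.1, by have := k.isLt; omega⟩

/-- Index of `y_k` (resp. `λ_{n+k}`). -/
def iy {n : ℕ} (k : Fin n) : Fin (2 * n + 1) := ⟨k.1 + n, by have := k.isLt; omega⟩

/-- Index of `z` (resp. `λ_{2n+1}`). -/
def iz {n : ℕ} : Fin (2 * n + 1) := ⟨2 * n, by omega⟩

/-- Canonical Poisson bracket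
`{f,g} = ∑ᵢ (∂f/∂qᵢ ∂g/∂λᵢ − ∂f/∂λᵢ ∂g/∂qᵢ)`. -/
noncomputable def PB {n : ℕ} (f g : Phase n → ℝ) (z : Phase n) : ℝ :=
  ∑ i, (fderiv ℝ f z (Pi.single i 1, 0) * fderiv ℝ g z (0, Pi.single i 1)
      - fderiv ℝ f z (0, Pi.single i 1) * fderiv ℝ g z (Pi.single i 1, 0))

/-- The LL Hamiltonian
`H = (1/2) ∑ₖ (1/σₖ)[λₖ² + (λ_{k+n} + xₖ λ_{2n+1})²]`. -/
noncomputable def Ham (n : ℕ) (σ : Fin n → ℝ) (z : Phase n) : ℝ :=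
  (1 / 2) * ∑ k, (1 / σ k) *
    ((z.2 (ix k)) ^ 2 + (z.2 (iy k) + z.1 (ix k) * z.2 iz) ^ 2)

/-!
The Hamiltonian depends on the positions only through `x`, so the momenta `λ_{2n+1}` and
`λ_{k+n}` conjugate to `z` and `y_k` are conserved. For `λ_k + y_k λ_{2n+1}` the bracket reduces
to `λ_{2n+1} ∂H/∂λ_{k+n} - ∂H/∂x_k`, and both terms equal `λ_{2n+1} (λ_{k+n} + x_k λ_{2n+1}) / σ_k`.
-/

open ContinuousLinearMap

section PoissonBracket

variable {n : ℕ}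

noncomputable def partialQ (g : Phase n → ℝ) (z : Phase n) (i : Fin (2 * n + 1)) : ℝ :=
  fderiv ℝ g z (Pi.single i 1, 0)

noncomputable def partialL (g : Phase n → ℝ) (z : Phase n) (i : Fin (2 * n + 1)) : ℝ :=
  fderiv ℝ g z (0, Pi.single i 1)

lemma PB_eq_sum_partial (f g : Phase n → ℝ) (z : Phase n) :
    PB f g z = ∑ i, (partialQ f z i * partialL g z i - partialL f z i * partialQ g z i) :=
  rfl

noncomputable def positionCoord (i : Fin (2 * n + 1)) : Phase n →L[ℝ] ℝ :=
  (proj i).comp (fst ℝ _ _)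

noncomputable def momentumCoord (i : Fin (2 * n + 1)) : Phase n →L[ℝ] ℝ :=
  (proj i).comp (snd ℝ _ _)

@[simp] lemma positionCoord_apply (i : Fin (2 * n + 1)) (w : Phase n) :
    positionCoord i w = w.1 i := rfl

@[simp] lemma momentumCoord_apply (i : Fin (2 * n + 1)) (w : Phase n) :
    momentumCoord i w = w.2 i := rfl

lemma HasFDerivAt.partialQ_eq {f : Phase n → ℝ} {L : Phase n →L[ℝ] ℝ} {z : Phase n}
    (hf : HasFDerivAt f L z) (i : Fin (2 * n + 1)) : partialQ f z i = L (Pi.single i 1, 0) := by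
  rw [partialQ, hf.fderiv]

lemma HasFDerivAt.partialL_eq {f : Phase n → ℝ} {L : Phase n →L[ℝ] ℝ} {z : Phase n}
    (hf : HasFDerivAt f L z) (i : Fin (2 * n + 1)) : partialL f z i = L (0, Pi.single i 1) := by
  rw [partialL, hf.fderiv]

lemma PB_momentum_left (j : Fin (2 * n + 1)) (g : Phase n → ℝ) (z : Phase n) :
    PB (fun w => w.2 j) g z = -partialQ g z j := by
  have hf : HasFDerivAt (fun w : Phase n => w.2 j) (momentumCoord j) z :=
    (momentumCoord j).hasFDerivAt
  simp [PB_eq_sum_partial, hf.partialQ_eq, hf.partialL_eq, Pi.single_apply]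

lemma PB_momentum_add_position_mul_momentum_left (a b c : Fin (2 * n + 1))
    (g : Phase n → ℝ) (z : Phase n) :
    PB (fun w => w.2 a + w.1 b * w.2 c) g z =
      z.2 c * partialL g z b - partialQ g z a - z.1 b * partialQ g z c := by
  have hf : HasFDerivAt (fun w : Phase n => w.2 a + w.1 b * w.2 c)
      (momentumCoord a + (z.1 b • momentumCoord c + z.2 c • positionCoord b)) z :=
    (momentumCoord a).hasFDerivAt.add
      ((positionCoord b).hasFDerivAt.mul (momentumCoord c).hasFDerivAt)
  simp [PB_eq_sum_partial, hf.partialQ_eq, hf.partialL_eq, Pi.single_apply, add_mul,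
    Finset.sum_sub_distrib, Finset.sum_add_distrib]
  ring

end PoissonBracket

section Hamiltonian

variable {n : ℕ}

@[simp] lemma ix_inj (k j : Fin n) : ix k = ix j ↔ k = j := by
  simp [ix, Fin.ext_iff]

@[simp] lemma ix_ne_iy (k j : Fin n) : ix k ≠ iy j := by
  simp [ix, iy, Fin.ext_iff]; omega

@[simp] lemma ix_ne_iz (k : Fin n) : ix k ≠ iz := by
  simp [ix, iz, Fin.ext_iff]; omega

@[simp] lemma iy_inj (k j : Fin n) : iy k = iy j ↔ k = j := by
  simp [iy, Fin.ext_iff]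

@[simp] lemma iy_ne_iz (k : Fin n) : iy k ≠ iz := by
  simp [iy, iz, Fin.ext_iff]; omega

lemma fderiv_Ham_apply (σ : Fin n → ℝ) (z : Phase n) (u v : Fin (2 * n + 1) → ℝ) :
    fderiv ℝ (Ham n σ) z (u, v) =
      ∑ k, (1 / σ k) * (z.2 (ix k) * v (ix k) + (z.2 (iy k) + z.1 (ix k) * z.2 iz) *
        (v (iy k) + z.1 (ix k) * v iz + z.2 iz * u (ix k))) := by
  have hA : ∀ k, HasFDerivAt (fun w : Phase n => w.2 (iy k) + w.1 (ix k) * w.2 iz)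
      (momentumCoord (iy k) + (z.1 (ix k) • momentumCoord iz + z.2 iz • positionCoord (ix k))) z :=
    fun k => (momentumCoord (iy k)).hasFDerivAt.add
      ((positionCoord (ix k)).hasFDerivAt.mul (momentumCoord iz).hasFDerivAt)
  have hH : HasFDerivAt (Ham n σ) _ z := (HasFDerivAt.fun_sum (u := Finset.univ) fun k _ =>
    (((momentumCoord (ix k)).hasFDerivAt.pow 2).add ((hA k).pow 2)).const_mul (1 / σ k)).const_mul
    (1 / 2 : ℝ)
  rw [hH.fderiv]
  simp only [smul_apply, FunLike.coe_sum, Finset.sum_apply, add_apply, smul_eq_mul, nsmul_eq_mul,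
    momentumCoord_apply, positionCoord_apply, Finset.mul_sum]
  refine Finset.sum_congr rfl fun k _ => ?_
  ring

lemma partialQ_Ham_iz (σ : Fin n → ℝ) (z : Phase n) : partialQ (Ham n σ) z iz = 0 := by
  simp [partialQ, fderiv_Ham_apply]

lemma partialQ_Ham_iy (σ : Fin n → ℝ) (z : Phase n) (k : Fin n) :
    partialQ (Ham n σ) z (iy k) = 0 := by
  simp [partialQ, fderiv_Ham_apply]

lemma partialQ_Ham_ix (σ : Fin n → ℝ) (z : Phase n) (k : Fin n) :
    partialQ (Ham n σ) z (ix k) = (1 / σ k) * ((z.2 (iy k) + z.1 (ix k) * z.2 iz) * z.2 iz) := by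
  simp [partialQ, fderiv_Ham_apply, Pi.single_apply]

lemma partialL_Ham_iy (σ : Fin n → ℝ) (z : Phase n) (k : Fin n) :
    partialL (Ham n σ) z (iy k) = (1 / σ k) * (z.2 (iy k) + z.1 (ix k) * z.2 iz) := by
  simp [partialL, fderiv_Ham_apply, Pi.single_apply]

end Hamiltonian

theorem LL_linear_first_integrals_general (n : ℕ) (σ : Fin n → ℝ)
    (z : Phase n) :
    PB (fun w => w.2 iz) (Ham n σ) z = 0 ∧
    (∀ k : Fin n, PB (fun w => w.2 (iy k)) (Ham n σ) z = 0) ∧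
    (∀ k : Fin n, PB (fun w => w.2 (ix k) + w.1 (iy k) * w.2 iz) (Ham n σ) z = 0) := by
  refine ⟨?_, fun k => ?_, fun k => ?_⟩
  · rw [PB_momentum_left, partialQ_Ham_iz, neg_zero]
  · rw [PB_momentum_left, partialQ_Ham_iy, neg_zero]
  · rw [PB_momentum_add_position_mul_momentum_left, partialL_Ham_iy, partialQ_Ham_ix,
      partialQ_Ham_iz]
    ring

/-- `I₀ = λ_{2n+1}`, `Iₖ = λ_{k+n}`, `I_{n+k} = λₖ + yₖ λ_{2n+1}`
are first integrals of the LL Hamiltonian system. -/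
theorem LL_linear_first_integrals (n : ℕ) (σ : Fin n → ℝ) (hσ : ∀ k, 0 < σ k)
    (z : Phase n) :
    PB (fun w => w.2 iz) (Ham n σ) z = 0 ∧
    (∀ k : Fin n, PB (fun w => w.2 (iy k)) (Ham n σ) z = 0) ∧
    (∀ k : Fin n, PB (fun w => w.2 (ix k) + w.1 (iy k) * w.2 iz) (Ham n σ) z = 0) :=
  LL_linear_first_integrals_general n σ z
end

section
/- For the system on ℝ^8 (n = 2 reduced LR Heisenberg system) ẋ_k = p_k + y_k W, ẏ_k = p_{k+2} − x_k W, ṗ_k = (C+W)(p_{k+2} − x_k W), ṗ_{k+2} = −(C+W)(p_k + y_k W) for k = 1,2, with W = (p_3 x_1 + p_4 x_2 − p_1 y_1 − p_2 y_2)/(1 + x_1² + x_2² + y_1² + y_2²), the Hamiltonian H_C = (1/2)(p_1²+p_2²+p_3²+p_4² − (1+x_1²+x_2²+y_1²+y_2²) W²) is a conserved quantity. -/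
/-!
Write `D = 1 + |x|² + |y|²`, `N = p₃x₁ + p₄x₂ − p₁y₁ − p₂y₂` (so `W = N / D`) and
`S = p₁x₁ + p₂x₂ + p₃y₁ + p₄y₂`. The system splits into two identical blocks
`(xₖ, yₖ, pₖ, p_{k+2})`. In each block the `W`-terms of `ẋ, ẏ` form a rotation, which is tangent to circles, so
`Ḋ = 2S`; the same cancellation gives `Ṅ = −C S` and `d/dt |p|² = −2(C + W) W S`.
Hence `Ẇ = −S (C + 2W) / D`, and the derivative of `|p|² − D W²` vanishes identically.
-/

section Block

variable {x y p q : ℝ → ℝ} {c w t : ℝ}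

theorem hasDerivAt_sq_add_sq_of_rotation {u v : ℝ} (hx : HasDerivAt x (u + y t * w) t)
    (hy : HasDerivAt y (v - x t * w) t) :
    HasDerivAt (fun s => x s ^ 2 + y s ^ 2) (2 * (u * x t + v * y t)) t :=
  ((hx.pow 2).add (hy.pow 2)).congr_deriv (by simp only [Nat.cast_ofNat]; ring)

theorem hasDerivAt_sq_add_sq_of_twisted_rotation
    (hp : HasDerivAt p ((c + w) * (q t - x t * w)) t)
    (hq : HasDerivAt q (-(c + w) * (p t + y t * w)) t) :
    HasDerivAt (fun s => p s ^ 2 + q s ^ 2) (-2 * (c + w) * w * (p t * x t + q t * y t)) t :=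
  ((hp.pow 2).add (hq.pow 2)).congr_deriv (by simp only [Nat.cast_ofNat]; ring)

theorem hasDerivAt_mul_sub_mul_of_block
    (hx : HasDerivAt x (p t + y t * w) t) (hy : HasDerivAt y (q t - x t * w) t)
    (hp : HasDerivAt p ((c + w) * (q t - x t * w)) t)
    (hq : HasDerivAt q (-(c + w) * (p t + y t * w)) t) :
    HasDerivAt (fun s => q s * x s - p s * y s) (-c * (p t * x t + q t * y t)) t :=
  ((hq.mul hx).sub (hp.mul hy)).congr_deriv (by ring)

end Block

section EnergyBalance

variable {P N D W : ℝ → ℝ} {c S t : ℝ}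

theorem hasDerivAt_of_eq_div (hW : ∀ s, W s = N s / D s) (hN : HasDerivAt N (-c * S) t)
    (hD : HasDerivAt D (2 * S) t) (hD0 : D t ≠ 0) :
    HasDerivAt W (-S * (c + 2 * W t) / D t) t := by
  refine ((hN.div hD hD0).congr_of_eventuallyEq (.of_forall hW)).congr_deriv ?_
  rw [hW t]
  field_simp
  ring

theorem hasDerivAt_half_mul_sub_mul_sq_eq_zero
    (hP : HasDerivAt P (-2 * (c + W t) * W t * S) t) (hD : HasDerivAt D (2 * S) t)
    (hW : HasDerivAt W (-S * (c + 2 * W t) / D t) t) (hD0 : D t ≠ 0) :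
    HasDerivAt (fun s => 1 / 2 * (P s - D s * W s ^ 2)) 0 t :=
  ((hP.sub (hD.mul (hW.pow 2))).const_mul (1 / 2)).congr_deriv (by
    simp only [Nat.cast_ofNat, Pi.pow_apply]
    field_simp
    ring)

end EnergyBalance

/-- for the `n = 2` reduced LR Heisenberg system with
`W = (p₃x₁ + p₄x₂ − p₁y₁ − p₂y₂)/(1 + x₁²+x₂²+y₁²+y₂²)`, the Hamiltonian
`H_C = (1/2)(p₁²+p₂²+p₃²+p₄² − (1+x₁²+x₂²+y₁²+y₂²)W²)` is conserved along the
flow `ẋₖ = pₖ + yₖW`, `ẏₖ = p_{k+2} − xₖW`, `ṗₖ = (C+W)(p_{k+2} − xₖW)`,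
`ṗ_{k+2} = −(C+W)(pₖ + yₖW)`. -/
theorem LR_n2_energy_conserved (C : ℝ)
    (x1 x2 y1 y2 p1 p2 p3 p4 : ℝ → ℝ)
    (hd : Differentiable ℝ x1 ∧ Differentiable ℝ x2 ∧ Differentiable ℝ y1 ∧
      Differentiable ℝ y2 ∧ Differentiable ℝ p1 ∧ Differentiable ℝ p2 ∧
      Differentiable ℝ p3 ∧ Differentiable ℝ p4)
    (W : ℝ → ℝ)
    (hW : ∀ t, W t = (p3 t * x1 t + p4 t * x2 t - p1 t * y1 t - p2 t * y2 t)
      / (1 + (x1 t) ^ 2 + (x2 t) ^ 2 + (y1 t) ^ 2 + (y2 t) ^ 2))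
    (hx1 : ∀ t, deriv x1 t = p1 t + y1 t * W t)
    (hx2 : ∀ t, deriv x2 t = p2 t + y2 t * W t)
    (hy1 : ∀ t, deriv y1 t = p3 t - x1 t * W t)
    (hy2 : ∀ t, deriv y2 t = p4 t - x2 t * W t)
    (hp1 : ∀ t, deriv p1 t = (C + W t) * (p3 t - x1 t * W t))
    (hp2 : ∀ t, deriv p2 t = (C + W t) * (p4 t - x2 t * W t))
    (hp3 : ∀ t, deriv p3 t = -(C + W t) * (p1 t + y1 t * W t))
    (hp4 : ∀ t, deriv p4 t = -(C + W t) * (p2 t + y2 t * W t)) :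
    ∀ t : ℝ, deriv (fun s =>
      (1 / 2) * ((p1 s) ^ 2 + (p2 s) ^ 2 + (p3 s) ^ 2 + (p4 s) ^ 2
        - (1 + (x1 s) ^ 2 + (x2 s) ^ 2 + (y1 s) ^ 2 + (y2 s) ^ 2)
          * (W s) ^ 2)) t = 0 := by
  obtain ⟨dx1, dx2, dy1, dy2, dp1, dp2, dp3, dp4⟩ := hd
  intro t
  have hx1t := hx1 t ▸ (dx1 t).hasDerivAt
  have hx2t := hx2 t ▸ (dx2 t).hasDerivAt
  have hy1t := hy1 t ▸ (dy1 t).hasDerivAt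
  have hy2t := hy2 t ▸ (dy2 t).hasDerivAt
  have hp1t := hp1 t ▸ (dp1 t).hasDerivAt
  have hp2t := hp2 t ▸ (dp2 t).hasDerivAt
  have hp3t := hp3 t ▸ (dp3 t).hasDerivAt
  have hp4t := hp4 t ▸ (dp4 t).hasDerivAt
  have hD0 : 1 + x1 t ^ 2 + x2 t ^ 2 + y1 t ^ 2 + y2 t ^ 2 ≠ 0 := by positivity
  set S := p1 t * x1 t + p2 t * x2 t + p3 t * y1 t + p4 t * y2 t
  have hD : HasDerivAt (fun s => 1 + x1 s ^ 2 + x2 s ^ 2 + y1 s ^ 2 + y2 s ^ 2) (2 * S) t :=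
    (((hasDerivAt_sq_add_sq_of_rotation hx1t hy1t).add
      (hasDerivAt_sq_add_sq_of_rotation hx2t hy2t)).const_add 1).congr_of_eventuallyEq
      (.of_forall fun s => by simp only [Pi.add_apply]; ring) |>.congr_deriv (by ring)
  have hN : HasDerivAt (fun s => p3 s * x1 s + p4 s * x2 s - p1 s * y1 s - p2 s * y2 s)
      (-C * S) t :=
    ((hasDerivAt_mul_sub_mul_of_block hx1t hy1t hp1t hp3t).add
      (hasDerivAt_mul_sub_mul_of_block hx2t hy2t hp2t hp4t)).congr_of_eventuallyEq
      (.of_forall fun s => by simp only [Pi.add_apply]; ring) |>.congr_deriv (by ring)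
  have hP : HasDerivAt (fun s => p1 s ^ 2 + p2 s ^ 2 + p3 s ^ 2 + p4 s ^ 2)
      (-2 * (C + W t) * W t * S) t :=
    ((hasDerivAt_sq_add_sq_of_twisted_rotation hp1t hp3t).add
      (hasDerivAt_sq_add_sq_of_twisted_rotation hp2t hp4t)).congr_of_eventuallyEq
      (.of_forall fun s => by simp only [Pi.add_apply]; ring) |>.congr_deriv (by ring)
  exact (hasDerivAt_half_mul_sub_mul_sq_eq_zero hP hD
    (hasDerivAt_of_eq_div hW hN hD hD0) hD0).deriv
end
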